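/- arXiv:2205.03638 — 5 statements merged into one kernel-verified Lean document; each statement's English description precedes it below -/
import Mathlib

section
/- There exist a constant C > 0 and an integer K ≥ 1 such that for all k ∈ ℤ with |k| ≥ K: |λ_k^+ + k² − i k| ≤ C/|k| and |λ_k^- + k⁴ + i k³ − k²| ≤ C/|k|. (Asymptotic expressions of the two parabolic branches of eigenvalues of the adjoint operator: λ_k^+ = −k² + ik + O(|k|^{-1}) and λ_k^- = −k⁴ − ik³ + k² + O(|k|^{-1}) as |k| → ∞.) -/
/-!
The discriminant factors as `c_k² − 4 d_k = a_k² − 4k²` with `a_k = c_k + 2(ik − k²)`, so both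
errors equal `±(√(c_k² − 4 d_k) − a_k)/2`. Since the principal root `s` has `Re s ≥ 0`, we get
`‖s + a_k‖ ≥ Re a_k ≈ k⁴`, and `(s − a_k)(s + a_k) = −4k²` then gives `‖s − a_k‖ = O(k⁻²)`.
-/

open Complex MeasureTheory Real Set

noncomputable section

/-- `c_k = k⁴ + i k³ − i k`. -/
def cc (k : ℤ) : ℂ := (k:ℂ)^4 + Complex.I * (k:ℂ)^3 - Complex.I * (k:ℂ)

/-- `d_k = k⁶ + i k³ + k²`. -/
def dd (k : ℤ) : ℂ := (k:ℂ)^6 + Complex.I * (k:ℂ)^3 + (k:ℂ)^2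

/-- `λ_k^+`, using the principal branch of the complex square root (`cpow (1/2)`). -/
def lamP (k : ℤ) : ℂ := (-cc k + (cc k ^ 2 - 4 * dd k) ^ ((1:ℂ)/2)) / 2

/-- `λ_k^-`. -/
def lamM (k : ℤ) : ℂ := (-cc k - (cc k ^ 2 - 4 * dd k) ^ ((1:ℂ)/2)) / 2

/-- `η_k^+ = −i k⁵ − (1 + λ_k^+) i k + k² − λ_k^+`. -/
def etaP (k : ℤ) : ℂ := -Complex.I * (k:ℂ)^5 - (1 + lamP k) * Complex.I * (k:ℂ) + (k:ℂ)^2 - lamP k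

/-- `η_k^-`. -/
def etaM (k : ℤ) : ℂ := -Complex.I * (k:ℂ)^5 - (1 + lamM k) * Complex.I * (k:ℂ) + (k:ℂ)^2 - lamM k

/-- `θ_k^+ = η_k^+ / λ_k^+`. -/
def thetaP (k : ℤ) : ℂ := etaP k / lamP k

/-- `θ_k^- = η_k^- / λ_k^-`. -/
def thetaM (k : ℤ) : ℂ := etaM k / lamM k

namespace Complex

theorem norm_cpow_one_half_sub_le (w a : ℂ) (ha : 0 < a.re) :
    ‖w ^ (1 / 2 : ℂ) - a‖ ≤ ‖a ^ 2 - w‖ / a.re := by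
  set s := w ^ (1 / 2 : ℂ)
  have hs_sq : s ^ 2 = w := by simpa only [s, one_div] using cpow_ofNat_inv_pow w 2
  have hs_re : 0 ≤ s.re := by
    simpa only [s, one_div, cpow_inv_two_re] using Real.sqrt_nonneg _
  have hsum : a.re ≤ ‖s + a‖ :=
    calc a.re ≤ (s + a).re := by rw [add_re]; linarith
      _ ≤ ‖s + a‖ := re_le_norm _
  have hprod : ‖s - a‖ * ‖s + a‖ = ‖a ^ 2 - w‖ := by
    rw [← norm_mul, ← norm_neg]
    congr 1
    linear_combination -hs_sq
  rw [le_div_iff₀ ha, ← hprod]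
  exact mul_le_mul_of_nonneg_left hsum (norm_nonneg _)

end Complex

def rootApprox (k : ℤ) : ℂ := cc k + 2 * (Complex.I * (k:ℂ) - (k:ℂ) ^ 2)

theorem rootApprox_sq_sub_disc (k : ℤ) :
    rootApprox k ^ 2 - (cc k ^ 2 - 4 * dd k) = 4 * (k:ℂ) ^ 2 := by
  unfold rootApprox cc dd
  linear_combination (4 * (k:ℂ) ^ 4) * Complex.I_sq

theorem rootApprox_re (k : ℤ) : (rootApprox k).re = (k:ℝ) ^ 4 - 2 * (k:ℝ) ^ 2 := by
  simp only [rootApprox, cc, pow_succ, pow_zero, one_mul, add_re, sub_re, mul_re, intCast_re,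
    intCast_im, mul_zero, sub_zero, mul_im, zero_mul, add_zero, I_re, I_im, sub_self, re_ofNat,
    zero_sub, mul_neg, im_ofNat, sub_im, zero_add]
  ring

theorem lamP_error_eq (k : ℤ) :
    lamP k + (k:ℂ) ^ 2 - Complex.I * (k:ℂ) =
      ((cc k ^ 2 - 4 * dd k) ^ (1 / 2 : ℂ) - rootApprox k) / 2 := by
  unfold lamP rootApprox
  ring

theorem lamM_error_eq_neg_lamP_error (k : ℤ) :
    lamM k + (k:ℂ) ^ 4 + Complex.I * (k:ℂ) ^ 3 - (k:ℂ) ^ 2 =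
      -(lamP k + (k:ℂ) ^ 2 - Complex.I * (k:ℂ)) := by
  unfold lamP lamM cc
  ring

theorem norm_lamP_error_le {k : ℤ} (hk : 2 ≤ |k|) :
    ‖lamP k + (k:ℂ) ^ 2 - Complex.I * (k:ℂ)‖ ≤ 4 / |(k:ℝ)| := by
  have hx : (2:ℝ) ≤ |(k:ℝ)| := by exact_mod_cast hk
  set x := |(k:ℝ)|
  have hx2 : (k:ℝ) ^ 2 = x ^ 2 := (sq_abs _).symm
  have hx4 : (k:ℝ) ^ 4 = x ^ 4 := (Even.pow_abs (by decide) _).symm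
  have hre : x ^ 4 / 2 ≤ (rootApprox k).re := by
    have hx_sq : 4 ≤ x ^ 2 := by nlinarith
    rw [rootApprox_re, hx2, hx4]
    nlinarith [mul_nonneg (sq_nonneg x) (sub_nonneg.2 hx_sq)]
  have hroot := Complex.norm_cpow_one_half_sub_le (cc k ^ 2 - 4 * dd k) _
    (lt_of_lt_of_le (by positivity) hre)
  rw [rootApprox_sq_sub_disc, norm_mul, norm_pow, Complex.norm_intCast, Complex.norm_ofNat]
    at hroot
  calc ‖lamP k + (k:ℂ) ^ 2 - Complex.I * (k:ℂ)‖
      = ‖(cc k ^ 2 - 4 * dd k) ^ (1 / 2 : ℂ) - rootApprox k‖ / 2 := by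
        rw [lamP_error_eq, norm_div, Complex.norm_two]
    _ ≤ 4 * x ^ 2 / (rootApprox k).re / 2 := by gcongr
    _ ≤ 4 * x ^ 2 / (x ^ 4 / 2) / 2 := by gcongr
    _ = 4 / x ^ 2 := by field_simp
    _ ≤ 4 / x := by gcongr; nlinarith

/-- asymptotics of the two eigenvalue branches:
`λ_k^+ = −k² + ik + O(|k|⁻¹)` and `λ_k^- = −k⁴ − ik³ + k² + O(|k|⁻¹)`. -/
theorem eigenvalue_asymptotics :
    ∃ (C : ℝ) (K : ℕ), 0 < C ∧ 1 ≤ K ∧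
      ∀ k : ℤ, (K:ℤ) ≤ |k| →
        ‖lamP k + (k:ℂ)^2 - Complex.I * (k:ℂ)‖ ≤ C / |(k:ℝ)| ∧
        ‖lamM k + (k:ℂ)^4 + Complex.I * (k:ℂ)^3 - (k:ℂ)^2‖ ≤ C / |(k:ℝ)| := by
  refine ⟨4, 2, by norm_num, by norm_num, fun k hk => ?_⟩
  have hP := norm_lamP_error_le (k := k) (by exact_mod_cast hk)
  exact ⟨hP, by rwa [lamM_error_eq_neg_lamP_error, norm_neg]⟩
end
end

section
/- All eigenvalues are distinct and nonzero: for every k ∈ ℤ \ {0} and sign s ∈ {+, −}, λ_k^s ≠ 0; and for all k, l ∈ ℤ \ {0} and signs s, s' ∈ {+, −}, if λ_k^s = λ_l^{s'} then k = l and s = s'. -/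
open Complex MeasureTheory Real Set

noncomputable section

/-! The eigenvalues `λ_k^±` are the roots of `z² + c_k z + d_k = (z - a_k)(z - b_k) + k²`,
where `a_k = -k² + i k` and `b_k = k² - k⁴ - i k³` are Gaussian integers at distance about `k⁴`
from each other. As `|z - a_k| |z - b_k| = k²`, every root lies within `1` of `a_k` or `b_k`,
and within `1/2` once `|k| ≥ 2`. So a common root of two indices with `|k|, |l| ≥ 2` forces a
common centre, which the explicit formulas rule out; for `|k| = 1` the real parts of the centres
(`≥ -1` against `≤ -4`) do the job, and `k = ±1` is a direct computation. Nonvanishing comes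
from `Im d_k = k³`, and `λ_k^+ ≠ λ_k^-` from `Im (c_k² - 4 d_k) = 2 k³ (k² - 2)(k² + 1)`. -/

lemma cpow_one_div_two_sq (w : ℂ) : (w ^ ((1 : ℂ) / 2)) ^ 2 = w := by
  rw [one_div, cpow_ofNat_inv_pow]

lemma lamP_sq_add_cc_mul_add_dd (k : ℤ) : lamP k ^ 2 + cc k * lamP k + dd k = 0 := by
  unfold lamP
  linear_combination (1 / 4 : ℂ) * cpow_one_div_two_sq (cc k ^ 2 - 4 * dd k)

lemma lamM_sq_add_cc_mul_add_dd (k : ℤ) : lamM k ^ 2 + cc k * lamM k + dd k = 0 := by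
  unfold lamM
  linear_combination (1 / 4 : ℂ) * cpow_one_div_two_sq (cc k ^ 2 - 4 * dd k)

lemma dd_im (k : ℤ) : (dd k).im = (k : ℝ) ^ 3 := by
  simp [dd, pow_succ]

lemma dd_ne_zero {k : ℤ} (hk : k ≠ 0) : dd k ≠ 0 := by
  intro h
  have him := dd_im k
  rw [h, zero_im] at him
  exact pow_ne_zero 3 (Int.cast_ne_zero.2 hk) him.symm

lemma ne_zero_of_sq_add_cc_mul_add_dd {k : ℤ} {z : ℂ} (hk : k ≠ 0)
    (hz : z ^ 2 + cc k * z + dd k = 0) : z ≠ 0 := by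
  rintro rfl
  exact dd_ne_zero hk (by simpa using hz)

lemma Int.sq_ne_two (k : ℤ) : k ^ 2 ≠ 2 := by
  rw [← sq_abs]
  rcases le_or_gt |k| 1 with h | h <;> nlinarith [abs_nonneg k]

lemma cc_sq_sub_four_mul_dd_im (k : ℤ) :
    (cc k ^ 2 - 4 * dd k).im = 2 * (k : ℝ) ^ 3 * ((k : ℝ) ^ 2 - 2) * ((k : ℝ) ^ 2 + 1) := by
  simp [cc, dd, pow_succ]; ring

lemma cc_sq_sub_four_mul_dd_ne_zero {k : ℤ} (hk : k ≠ 0) : cc k ^ 2 - 4 * dd k ≠ 0 := by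
  intro h
  have him := cc_sq_sub_four_mul_dd_im k
  rw [h, zero_im] at him
  have hk3 : (k : ℝ) ^ 3 ≠ 0 := pow_ne_zero 3 (Int.cast_ne_zero.2 hk)
  have hk2 : (k : ℝ) ^ 2 - 2 ≠ 0 := sub_ne_zero.2 (by exact_mod_cast Int.sq_ne_two k)
  have hk1 : (k : ℝ) ^ 2 + 1 ≠ 0 := by positivity
  exact mul_ne_zero (mul_ne_zero (mul_ne_zero two_ne_zero hk3) hk2) hk1 him.symm

lemma lamP_ne_lamM {k : ℤ} (hk : k ≠ 0) : lamP k ≠ lamM k := by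
  intro h
  have hsub : lamP k - lamM k = (cc k ^ 2 - 4 * dd k) ^ ((1 : ℂ) / 2) := by
    unfold lamP lamM; ring
  rw [h, sub_self, eq_comm, cpow_eq_zero_iff] at hsub
  exact cc_sq_sub_four_mul_dd_ne_zero hk hsub.1

lemma norm_sub_lt_or_norm_sub_lt_of_mul_le {E : Type*} [SeminormedAddGroup E] {z a b : E}
    {m r : ℝ} (hm : ‖z - a‖ * ‖z - b‖ ≤ m) (hr : m + r ^ 2 < r * ‖a - b‖) :
    ‖z - a‖ < r ∨ ‖z - b‖ < r := by
  by_contra! h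
  have htri : ‖a - b‖ ≤ ‖z - a‖ + ‖z - b‖ := by
    simpa only [norm_sub_rev a z] using norm_sub_le_norm_sub_add_norm_sub a z b
  have hr0 : 0 ≤ r := by nlinarith [norm_nonneg (z - a), norm_nonneg (z - b), norm_nonneg (a - b)]
  nlinarith [mul_nonneg (sub_nonneg.2 h.1) (sub_nonneg.2 h.2)]

lemma GaussianInt.eq_zero_of_norm_lt_one {x : GaussianInt} (hx : ‖(x : ℂ)‖ < 1) : x = 0 := by
  have hnorm : (x.norm : ℝ) < 1 := by
    rw [GaussianInt.intCast_real_norm, ← Complex.sq_norm]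
    nlinarith [_root_.norm_nonneg (x : ℂ)]
  have hlt : x.norm < 1 := by exact_mod_cast hnorm
  have := x.norm_nonneg
  exact GaussianInt.norm_eq_zero.1 (by omega)

def centerA (k : ℤ) : GaussianInt := ⟨-k ^ 2, k⟩

def centerB (k : ℤ) : GaussianInt := ⟨k ^ 2 - k ^ 4, -k ^ 3⟩

def centers (k : ℤ) : Set GaussianInt := {centerA k, centerB k}

lemma sq_add_cc_mul_add_dd_eq (k : ℤ) (z : ℂ) :
    z ^ 2 + cc k * z + dd k = (z - centerA k) * (z - centerB k) + (k : ℂ) ^ 2 := by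
  simp only [centerA, centerB, GaussianInt.toComplex_def', cc, dd]
  push_cast
  linear_combination (k : ℂ) ^ 4 * I_sq

lemma norm_centerA_sub_centerB (k : ℤ) :
    (centerA k - centerB k).norm = (k ^ 4 - 2 * k ^ 2) ^ 2 + (k ^ 3 + k) ^ 2 := by
  simp [centerA, centerB, Zsqrtd.norm]; ring

lemma exists_mem_centers_norm_sub_lt {k : ℤ} {z : ℂ} {r : ℝ} (hr0 : 0 ≤ r)
    (hz : z ^ 2 + cc k * z + dd k = 0)
    -- `hr` is `k² < r (|a_k - b_k| - r)`, squared
    (hr : ((k : ℝ) ^ 2 + r ^ 2) ^ 2 < r ^ 2 * (centerA k - centerB k).norm) :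
    ∃ C ∈ centers k, ‖z - C‖ < r := by
  have hprod : ‖z - centerA k‖ * ‖z - centerB k‖ = (k : ℝ) ^ 2 := by
    rw [← norm_mul, eq_neg_of_add_eq_zero_left ((sq_add_cc_mul_add_dd_eq k z).symm.trans hz)]
    simp
  have hgap : (k : ℝ) ^ 2 + r ^ 2 < r * ‖(centerA k : ℂ) - centerB k‖ := by
    refine lt_of_pow_lt_pow_left₀ 2 (mul_nonneg hr0 (norm_nonneg _)) ?_
    rwa [mul_pow, Complex.sq_norm, ← GaussianInt.toComplex_sub, ← GaussianInt.intCast_real_norm]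
  rcases norm_sub_lt_or_norm_sub_lt_of_mul_le hprod.le hgap with h | h
  · exact ⟨_, Or.inl rfl, h⟩
  · exact ⟨_, Or.inr rfl, h⟩

lemma exists_mem_centers_norm_sub_lt_one {k : ℤ} {z : ℂ} (hk : k ≠ 0)
    (hz : z ^ 2 + cc k * z + dd k = 0) : ∃ C ∈ centers k, ‖z - C‖ < 1 := by
  refine exists_mem_centers_norm_sub_lt zero_le_one hz ?_
  have hk2 : 1 ≤ k ^ 2 := by nlinarith [Int.one_le_abs hk, sq_abs k]
  have : (k ^ 2 + 1) ^ 2 < (centerA k - centerB k).norm := by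
    rw [norm_centerA_sub_centerB]
    nlinarith [sq_nonneg (k ^ 2 - 1), mul_nonneg (sub_nonneg.2 hk2) (sq_nonneg (k ^ 2 - 2))]
  rw [one_pow, one_mul]
  exact_mod_cast this

lemma exists_mem_centers_norm_sub_lt_half {k : ℤ} {z : ℂ} (hk : 2 ≤ |k|)
    (hz : z ^ 2 + cc k * z + dd k = 0) : ∃ C ∈ centers k, ‖z - C‖ < 1 / 2 := by
  refine exists_mem_centers_norm_sub_lt (by norm_num) hz ?_
  have hk2 : 4 ≤ k ^ 2 := by nlinarith [sq_abs k]
  have : (4 * k ^ 2 + 1) ^ 2 < 4 * (centerA k - centerB k).norm := by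
    rw [norm_centerA_sub_centerB]
    nlinarith [sq_nonneg (k ^ 2 - 4), mul_nonneg (sub_nonneg.2 hk2) (sq_nonneg (k ^ 2 - 2))]
  have hR : ((4 * k ^ 2 + 1) ^ 2 : ℝ) < 4 * (centerA k - centerB k).norm := by exact_mod_cast this
  nlinarith

lemma centerA_ne_centerB (k : ℤ) {l : ℤ} (hl : l ≠ 0) : centerA k ≠ centerB l := by
  intro h
  obtain ⟨hre, him⟩ := Zsqrtd.ext_iff.1 h
  simp only [centerA, centerB] at hre him
  subst him
  have : l ^ 2 * (l ^ 4 - l ^ 2 + 1) = 0 := by linear_combination -hre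
  rcases mul_eq_zero.1 this with h | h
  · exact hl (pow_eq_zero_iff two_ne_zero |>.1 h)
  · nlinarith [sq_nonneg (l ^ 2 - 1), sq_nonneg l]

lemma eq_of_mem_centers {k l : ℤ} {C : GaussianInt} (hk : k ≠ 0) (hl : l ≠ 0)
    (hCk : C ∈ centers k) (hCl : C ∈ centers l) : k = l := by
  rcases hCk with rfl | rfl <;> rcases hCl with h | h
  · simpa [centerA] using (Zsqrtd.ext_iff.1 h).2
  · exact absurd h (centerA_ne_centerB k hl)
  · exact absurd h.symm (centerA_ne_centerB l hk)
  · simpa [centerB, Odd.pow_inj (show Odd 3 by decide)] using (Zsqrtd.ext_iff.1 h).2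

lemma re_le_of_mem_centers {k : ℤ} {C : GaussianInt} (hk : 2 ≤ |k|) (hC : C ∈ centers k) :
    C.re ≤ -4 := by
  have hk2 : 4 ≤ k ^ 2 := by nlinarith [sq_abs k]
  rcases hC with rfl | rfl
  · simp only [centerA]; linarith
  · simp only [centerB]; nlinarith

lemma neg_one_le_re_of_mem_centers {k : ℤ} {C : GaussianInt} (hk : |k| = 1)
    (hC : C ∈ centers k) : -1 ≤ C.re := by
  rcases abs_eq zero_le_one |>.1 hk with rfl | rfl <;> rcases hC with rfl | rfl <;>
    simp [centerA, centerB]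

lemma eq_of_sq_add_cc_mul_add_dd_of_abs_eq_one {k l : ℤ} {z : ℂ} (hk : |k| = 1) (hl : |l| = 1)
    (hzk : z ^ 2 + cc k * z + dd k = 0) (hzl : z ^ 2 + cc l * z + dd l = 0) : k = l := by
  rcases abs_eq_abs.1 (hk.trans hl.symm) with h | h
  · exact h
  · obtain rfl : l = -k := by omega
    exfalso
    have hk3 : (k : ℂ) ^ 3 = k := by
      rcases abs_eq zero_le_one |>.1 hk with rfl | rfl <;> norm_num
    have h2k : 2 * I * k = 0 := by
      simp only [cc, dd] at hzk hzl
      push_cast at hzl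
      linear_combination hzk - hzl - (2 * I * z + 2 * I) * hk3
    have hk0 : k ≠ 0 := by rintro rfl; simp at hk
    simp [I_ne_zero, hk0] at h2k

lemma eq_of_sq_add_cc_mul_add_dd {k l : ℤ} {z : ℂ} (hk : k ≠ 0) (hl : l ≠ 0)
    (hzk : z ^ 2 + cc k * z + dd k = 0) (hzl : z ^ 2 + cc l * z + dd l = 0) : k = l := by
  wlog hkl : |k| ≤ |l| generalizing k l
  · exact (this hl hk hzl hzk (le_of_not_ge hkl)).symm
  have hl' : |l| = 1 ∨ 2 ≤ |l| := by have := Int.one_le_abs hl; omega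
  rcases (show |k| = 1 ∨ 2 ≤ |k| by have := Int.one_le_abs hk; omega) with hk1 | hk2
  · rcases hl' with hl1 | hl2
    · exact eq_of_sq_add_cc_mul_add_dd_of_abs_eq_one hk1 hl1 hzk hzl
    · obtain ⟨C, hC, hzC⟩ := exists_mem_centers_norm_sub_lt_one hk hzk
      obtain ⟨D, hD, hzD⟩ := exists_mem_centers_norm_sub_lt_half hl2 hzl
      have hzC' := abs_lt.1 ((abs_re_le_norm _).trans_lt hzC)
      have hzD' := abs_lt.1 ((abs_re_le_norm _).trans_lt hzD)
      have hCre : (-1 : ℝ) ≤ C.re := by exact_mod_cast neg_one_le_re_of_mem_centers hk1 hC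
      have hDre : (D.re : ℝ) ≤ -4 := by exact_mod_cast re_le_of_mem_centers hl2 hD
      simp only [sub_re, ← GaussianInt.intCast_re] at hzC' hzD'
      linarith [hzC'.1, hzD'.2]
  · obtain ⟨C, hC, hzC⟩ := exists_mem_centers_norm_sub_lt_half hk2 hzk
    obtain ⟨D, hD, hzD⟩ := exists_mem_centers_norm_sub_lt_half (hk2.trans hkl) hzl
    have hCD : C = D := by
      refine sub_eq_zero.1 (GaussianInt.eq_zero_of_norm_lt_one ?_)
      calc ‖((C - D : GaussianInt) : ℂ)‖ = ‖(z - D) - (z - C)‖ := by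
            rw [GaussianInt.toComplex_sub, sub_sub_sub_cancel_left]
        _ ≤ ‖z - D‖ + ‖z - C‖ := norm_sub_le _ _
        _ < 1 := by linarith
    exact eq_of_mem_centers hk hl hC (hCD ▸ hD)

/-- all the eigenvalues `λ_k^±`, `k ≠ 0`, are nonzero and pairwise
distinct (distinct indices or distinct signs give distinct eigenvalues). -/
theorem eigenvalues_nonzero_and_distinct :
    (∀ k : ℤ, k ≠ 0 → lamP k ≠ 0 ∧ lamM k ≠ 0) ∧
    (∀ k l : ℤ, k ≠ 0 → l ≠ 0 →
      (lamP k = lamP l → k = l) ∧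
      (lamM k = lamM l → k = l) ∧
      lamP k ≠ lamM l) := by
  refine ⟨fun k hk => ⟨ne_zero_of_sq_add_cc_mul_add_dd hk (lamP_sq_add_cc_mul_add_dd k),
    ne_zero_of_sq_add_cc_mul_add_dd hk (lamM_sq_add_cc_mul_add_dd k)⟩,
    fun k l hk hl => ⟨fun h => ?_, fun h => ?_, fun h => ?_⟩⟩
  · exact eq_of_sq_add_cc_mul_add_dd hk hl (lamP_sq_add_cc_mul_add_dd k)
      (h ▸ lamP_sq_add_cc_mul_add_dd l)
  · exact eq_of_sq_add_cc_mul_add_dd hk hl (lamM_sq_add_cc_mul_add_dd k)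
      (h ▸ lamM_sq_add_cc_mul_add_dd l)
  · obtain rfl := eq_of_sq_add_cc_mul_add_dd hk hl (lamP_sq_add_cc_mul_add_dd k)
      (h ▸ lamM_sq_add_cc_mul_add_dd l)
    exact lamP_ne_lamM hk h
end
end

section
/- For every k ∈ ℤ \ {0} one has η_k^± ≠ 0 (and hence θ_k^± ≠ 0), and there exist constants C, c > 0 and an integer K ≥ 1 such that for all k ∈ ℤ with |k| ≥ K: |θ_k^+| ≤ C |k|³ and |θ_k^-| ≤ c |k|^{-3}. -/
open Complex MeasureTheory Real Set

noncomputable section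

/-!
The numbers `λ_k^±` are the two roots of `λ² + c_k λ + d_k`, and `η_k^± = a_k - λ_k^± b_k`
with `a_k = k² - i k⁵ - i k`, `b_k = 1 + i k`. By Vieta,
`η_k^+ η_k^- = a_k² + c_k a_k b_k + d_k b_k²`, which is the polynomial `-d_k`; as `Re d_k > 0`,
every `η`, `λ`, `θ` is nonzero and `θ_k^+ θ_k^- = -1`. Moreover
`θ_k^+ + θ_k^- = -(c_k a_k + 2 b_k d_k) / d_k` has modulus of order `|k|³`. The principal
square root has nonnegative real part, so `|λ_k^-| ≥ k⁴ / 2` and hence `|θ_k^-| ≤ 8 |k|`: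
thus `θ_k^+` is the large root, of size `|k|³`, and `θ_k^- = -1 / θ_k^+` is of size `|k|⁻³`.
-/

namespace Complex

lemma cpow_one_div_two_mul_self (z : ℂ) : z ^ ((1 : ℂ) / 2) * z ^ ((1 : ℂ) / 2) = z := by
  rw [← sq, one_div, cpow_ofNat_inv_pow]

lemma re_cpow_one_div_two_nonneg (z : ℂ) : 0 ≤ (z ^ ((1 : ℂ) / 2)).re := by
  rw [one_div, cpow_inv_two_re]
  exact Real.sqrt_nonneg _

end Complex

lemma norm_le_inv_sub_of_norm_mul_norm_eq_one {E : Type*} [SeminormedAddCommGroup E]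
    {x y : E} {a b : ℝ} (hxy : ‖x‖ * ‖y‖ = 1) (hy : ‖y‖ ≤ a) (hab : a < b)
    (hsum : b ≤ ‖x + y‖) : ‖y‖ ≤ (b - a)⁻¹ := by
  have hx : b - a ≤ ‖x‖ := by linarith [norm_add_le x y]
  rw [eq_inv_of_mul_eq_one_right hxy]
  exact inv_anti₀ (sub_pos.2 hab) hx

lemma lamP_add_lamM (k : ℤ) : lamP k + lamM k = -cc k := by
  unfold lamP lamM; ring

lemma lamP_mul_lamM (k : ℤ) : lamP k * lamM k = dd k := by
  unfold lamP lamM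
  linear_combination (-1 / 4 : ℂ) * Complex.cpow_one_div_two_mul_self (cc k ^ 2 - 4 * dd k)

def aa (k : ℤ) : ℂ := (k : ℂ) ^ 2 - I * (k : ℂ) ^ 5 - I * k

def bb (k : ℤ) : ℂ := 1 + I * k

def nn (k : ℤ) : ℂ := cc k * aa k + 2 * bb k * dd k

lemma etaP_eq (k : ℤ) : etaP k = aa k - lamP k * bb k := by
  unfold etaP aa bb; ring

lemma etaM_eq (k : ℤ) : etaM k = aa k - lamM k * bb k := by
  unfold etaM aa bb; ring

lemma aa_sq_add_cc_mul_aa_mul_bb_add_dd_mul_bb_sq (k : ℤ) :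
    aa k ^ 2 + cc k * aa k * bb k + dd k * bb k ^ 2 = -dd k := by
  unfold aa bb cc dd
  linear_combination ((-(k : ℂ) ^ 9 + (k : ℂ) ^ 7 + (k : ℂ) ^ 3) * I
    + 3 * (k : ℂ) ^ 6 + (k : ℂ) ^ 4 + 2 * (k : ℂ) ^ 2) * I_sq

lemma etaP_mul_etaM (k : ℤ) : etaP k * etaM k = -dd k := by
  rw [etaP_eq, etaM_eq]
  linear_combination aa_sq_add_cc_mul_aa_mul_bb_add_dd_mul_bb_sq k - aa k * bb k * lamP_add_lamM k
    + bb k ^ 2 * lamP_mul_lamM k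

lemma etaP_mul_lamM_add_lamP_mul_etaM (k : ℤ) :
    etaP k * lamM k + lamP k * etaM k = -nn k := by
  rw [etaP_eq, etaM_eq, nn]
  linear_combination aa k * lamP_add_lamM k - 2 * bb k * lamP_mul_lamM k

lemma cc_re (k : ℤ) : (cc k).re = (k : ℝ) ^ 4 := by
  simp [cc, ← ofReal_intCast, ← ofReal_pow]

lemma dd_re (k : ℤ) : (dd k).re = (k : ℝ) ^ 6 + (k : ℝ) ^ 2 := by
  simp [dd, ← ofReal_intCast, ← ofReal_pow]

lemma nn_im (k : ℤ) : (nn k).im = -(k : ℝ) ^ 3 * ((k : ℝ) ^ 6 - 2 * (k : ℝ) ^ 4 - 3) := by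
  simp only [nn, cc, aa, bb, dd, ← ofReal_intCast, ← ofReal_pow, add_im, mul_im, sub_re, add_re,
    ofReal_re, mul_re, I_re, zero_mul, I_im, ofReal_im, mul_zero, sub_self, add_zero, sub_zero,
    sub_im, one_mul, zero_add, zero_sub, re_ofNat, one_re, mul_one, im_ofNat, one_im, neg_mul]
  ring

lemma etaP_ne_zero {k : ℤ} (hk : k ≠ 0) : etaP k ≠ 0 :=
  left_ne_zero_of_mul (by rw [etaP_mul_etaM]; exact neg_ne_zero.2 (dd_ne_zero hk))

lemma etaM_ne_zero {k : ℤ} (hk : k ≠ 0) : etaM k ≠ 0 :=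
  right_ne_zero_of_mul (by rw [etaP_mul_etaM]; exact neg_ne_zero.2 (dd_ne_zero hk))

lemma lamP_ne_zero {k : ℤ} (hk : k ≠ 0) : lamP k ≠ 0 :=
  left_ne_zero_of_mul (by rw [lamP_mul_lamM]; exact dd_ne_zero hk)

lemma lamM_ne_zero {k : ℤ} (hk : k ≠ 0) : lamM k ≠ 0 :=
  right_ne_zero_of_mul (by rw [lamP_mul_lamM]; exact dd_ne_zero hk)

lemma thetaP_mul_thetaM {k : ℤ} (hk : k ≠ 0) : thetaP k * thetaM k = -1 := by
  rw [thetaP, thetaM, div_mul_div_comm, etaP_mul_etaM, lamP_mul_lamM, neg_div,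
    div_self (dd_ne_zero hk)]

lemma thetaP_add_thetaM {k : ℤ} (hk : k ≠ 0) : thetaP k + thetaM k = -nn k / dd k := by
  rw [thetaP, thetaM, div_add_div _ _ (lamP_ne_zero hk) (lamM_ne_zero hk),
    etaP_mul_lamM_add_lamP_mul_etaM, lamP_mul_lamM]

lemma abs_pow_six_le_norm_dd (k : ℤ) : |(k : ℝ)| ^ 6 ≤ ‖dd k‖ :=
  calc |(k : ℝ)| ^ 6 ≤ (dd k).re := by
        rw [dd_re, Even.pow_abs (by decide)]; nlinarith [sq_nonneg (k : ℝ)]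
    _ ≤ ‖dd k‖ := re_le_norm _

lemma abs_pow_four_div_two_le_norm_lamM (k : ℤ) : |(k : ℝ)| ^ 4 / 2 ≤ ‖lamM k‖ :=
  calc |(k : ℝ)| ^ 4 / 2 ≤ (-lamM k).re := by
        have := Complex.re_cpow_one_div_two_nonneg (cc k ^ 2 - 4 * dd k)
        simp only [lamM, neg_re, div_ofNat_re, sub_re, cc_re]
        rw [Even.pow_abs (by decide)]; linarith
    _ ≤ ‖lamM k‖ := by rw [← norm_neg]; exact re_le_norm _

section Bounds

variable {k : ℤ}

lemma norm_intCast_pow_le (hk : k ≠ 0) {j n : ℕ} (h : j ≤ n) :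
    ‖(k : ℂ) ^ j‖ ≤ |(k : ℝ)| ^ n := by
  rw [norm_pow, norm_intCast]
  exact pow_le_pow_right₀ (by exact_mod_cast Int.one_le_abs hk) h

lemma norm_aa_le (hk : k ≠ 0) : ‖aa k‖ ≤ 3 * |(k : ℝ)| ^ 5 := by
  have h2 := norm_intCast_pow_le hk (show 2 ≤ 5 by norm_num)
  have h5 := norm_intCast_pow_le hk (le_refl 5)
  have h1 := norm_intCast_pow_le hk (show 1 ≤ 5 by norm_num)
  rw [pow_one] at h1
  calc ‖aa k‖ ≤ ‖(k : ℂ) ^ 2‖ + ‖I * (k : ℂ) ^ 5‖ + ‖I * (k : ℂ)‖ :=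
        (norm_sub_le _ _).trans (by gcongr; exact norm_sub_le _ _)
    _ ≤ 3 * |(k : ℝ)| ^ 5 := by simp only [norm_mul, norm_I, one_mul]; linarith

lemma norm_bb_le (hk : k ≠ 0) : ‖bb k‖ ≤ 2 * |(k : ℝ)| := by
  have h1 : (1 : ℝ) ≤ |(k : ℝ)| := by exact_mod_cast Int.one_le_abs hk
  calc ‖bb k‖ ≤ ‖(1 : ℂ)‖ + ‖I * (k : ℂ)‖ := norm_add_le _ _
    _ ≤ 2 * |(k : ℝ)| := by
      simp only [norm_mul, norm_I, one_mul, norm_one, norm_intCast]; linarith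

lemma norm_cc_le (hk : k ≠ 0) : ‖cc k‖ ≤ 3 * |(k : ℝ)| ^ 4 := by
  have h4 := norm_intCast_pow_le hk (le_refl 4)
  have h3 := norm_intCast_pow_le hk (show 3 ≤ 4 by norm_num)
  have h1 := norm_intCast_pow_le hk (show 1 ≤ 4 by norm_num)
  rw [pow_one] at h1
  calc ‖cc k‖ ≤ ‖(k : ℂ) ^ 4‖ + ‖I * (k : ℂ) ^ 3‖ + ‖I * (k : ℂ)‖ :=
        (norm_sub_le _ _).trans (by gcongr; exact norm_add_le _ _)
    _ ≤ 3 * |(k : ℝ)| ^ 4 := by simp only [norm_mul, norm_I, one_mul]; linarith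

lemma norm_dd_le (hk : k ≠ 0) : ‖dd k‖ ≤ 3 * |(k : ℝ)| ^ 6 := by
  have h6 := norm_intCast_pow_le hk (le_refl 6)
  have h3 := norm_intCast_pow_le hk (show 3 ≤ 6 by norm_num)
  have h2 := norm_intCast_pow_le hk (show 2 ≤ 6 by norm_num)
  calc ‖dd k‖ ≤ ‖(k : ℂ) ^ 6‖ + ‖I * (k : ℂ) ^ 3‖ + ‖(k : ℂ) ^ 2‖ :=
        norm_add₃_le
    _ ≤ 3 * |(k : ℝ)| ^ 6 := by simp only [norm_mul, norm_I, one_mul]; linarith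

lemma norm_thetaM_le (hk : k ≠ 0) : ‖thetaM k‖ ≤ 8 * |(k : ℝ)| := by
  have hlam := abs_pow_four_div_two_le_norm_lamM k
  have hm : 0 < |(k : ℝ)| := by positivity
  have hlam0 : 0 < ‖lamM k‖ := lt_of_lt_of_le (by positivity) hlam
  have heta : ‖etaM k‖ ≤ 3 * |(k : ℝ)| ^ 5 + ‖lamM k‖ * (2 * |(k : ℝ)|) :=
    calc ‖etaM k‖ ≤ ‖aa k‖ + ‖lamM k‖ * ‖bb k‖ := by
          rw [etaM_eq, ← norm_mul]; exact norm_sub_le _ _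
      _ ≤ _ := by gcongr; exacts [norm_aa_le hk, norm_bb_le hk]
  rw [thetaM, norm_div, div_le_iff₀ hlam0]
  nlinarith

lemma norm_thetaP_add_thetaM_le (hk : k ≠ 0) :
    ‖thetaP k + thetaM k‖ ≤ 9 * |(k : ℝ)| ^ 3 + 12 * |(k : ℝ)| := by
  set m := |(k : ℝ)|
  have hnn : ‖nn k‖ ≤ 9 * m ^ 9 + 12 * m ^ 7 :=
    calc ‖nn k‖ ≤ ‖cc k‖ * ‖aa k‖ + 2 * ‖bb k‖ * ‖dd k‖ := by
          simpa only [nn, norm_mul, RCLike.norm_ofNat] using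
            norm_add_le (cc k * aa k) (2 * bb k * dd k)
      _ ≤ (3 * m ^ 4) * (3 * m ^ 5) + 2 * (2 * m) * (3 * m ^ 6) := by
          gcongr; exacts [norm_cc_le hk, norm_aa_le hk, norm_bb_le hk, norm_dd_le hk]
      _ = _ := by ring
  have hdd := abs_pow_six_le_norm_dd k
  have hm : 0 < m := by positivity
  rw [thetaP_add_thetaM hk, norm_div, norm_neg, div_le_iff₀ (lt_of_lt_of_le (by positivity) hdd)]
  nlinarith [pow_pos hm 3]

lemma abs_pow_three_div_six_le_norm_thetaP_add_thetaM (hk : 3 ≤ |(k : ℝ)|) :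
    |(k : ℝ)| ^ 3 / 6 ≤ ‖thetaP k + thetaM k‖ := by
  have hk0 : k ≠ 0 := by rintro rfl; norm_num at hk
  have hnn : |(k : ℝ)| ^ 9 / 2 ≤ ‖nn k‖ :=
    calc |(k : ℝ)| ^ 9 / 2 ≤ |(nn k).im| := by
          rw [nn_im, abs_mul, abs_neg, abs_pow, ← Even.pow_abs (show Even 6 by decide),
            ← Even.pow_abs (show Even 4 by decide)]
          set m := |(k : ℝ)|
          have hm4 : 0 < m ^ 4 := by positivity
          have hm6 : m ^ 6 / 2 ≤ m ^ 6 - 2 * m ^ 4 - 3 := by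
            have hm2 : 9 ≤ m ^ 2 := by nlinarith
            nlinarith [show m ^ 6 = m ^ 2 * m ^ 4 by ring, mul_le_mul_of_nonneg_right hm2 hm4.le]
          calc m ^ 9 / 2 = m ^ 3 * (m ^ 6 / 2) := by ring
            _ ≤ m ^ 3 * |m ^ 6 - 2 * m ^ 4 - 3| := by gcongr; exact hm6.trans (le_abs_self _)
      _ ≤ ‖nn k‖ := abs_im_le_norm _
  have hdd := norm_dd_le hk0
  have hm : 0 < |(k : ℝ)| := by positivity
  have hdd0 : 0 < ‖dd k‖ := lt_of_lt_of_le (by positivity) (abs_pow_six_le_norm_dd k)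
  rw [thetaP_add_thetaM hk0, norm_div, norm_neg, le_div_iff₀ hdd0]
  nlinarith [pow_pos hm 3]

end Bounds

/-- `η_k^± ≠ 0` (hence `θ_k^± ≠ 0`) for all `k ≠ 0`, together with the
asymptotic bounds `|θ_k^+| ≤ C|k|³` and `|θ_k^-| ≤ c|k|⁻³` for large `|k|`. -/
theorem eta_theta_nonzero_and_theta_bounds :
    (∀ k : ℤ, k ≠ 0 → etaP k ≠ 0 ∧ etaM k ≠ 0 ∧ thetaP k ≠ 0 ∧ thetaM k ≠ 0) ∧
    (∃ (C c : ℝ) (K : ℕ), 0 < C ∧ 0 < c ∧ 1 ≤ K ∧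
      ∀ k : ℤ, (K:ℤ) ≤ |k| →
        ‖thetaP k‖ ≤ C * |(k:ℝ)|^3 ∧
        ‖thetaM k‖ ≤ c / |(k:ℝ)|^3) := by
  refine ⟨fun k hk => ⟨etaP_ne_zero hk, etaM_ne_zero hk,
    div_ne_zero (etaP_ne_zero hk) (lamP_ne_zero hk),
    div_ne_zero (etaM_ne_zero hk) (lamM_ne_zero hk)⟩,
    11, 12, 10, by norm_num, by norm_num, by norm_num, fun k hK => ?_⟩
  have hm : (10 : ℝ) ≤ |(k : ℝ)| := by rw [← Int.cast_abs]; exact_mod_cast hK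
  have hk : k ≠ 0 := by rintro rfl; norm_num at hm
  have hM := norm_thetaM_le hk
  have hsum := norm_thetaP_add_thetaM_le hk
  have hsum' := abs_pow_three_div_six_le_norm_thetaP_add_thetaM (by linarith : 3 ≤ |(k : ℝ)|)
  have hprod : ‖thetaP k‖ * ‖thetaM k‖ = 1 := by
    rw [← norm_mul, thetaP_mul_thetaM hk, norm_neg, norm_one]
  set m := |(k : ℝ)|
  have hm2 : 100 ≤ m ^ 2 := by nlinarith
  constructor
  · calc ‖thetaP k‖ ≤ ‖thetaP k + thetaM k‖ + ‖thetaM k‖ := norm_le_add_norm_add _ _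
      _ ≤ 9 * m ^ 3 + 12 * m + 8 * m := by linarith
      _ ≤ 11 * m ^ 3 := by nlinarith
  · have hgap : m ^ 3 / 12 ≤ m ^ 3 / 6 - 8 * m := by nlinarith
    calc ‖thetaM k‖ ≤ (m ^ 3 / 6 - 8 * m)⁻¹ :=
          norm_le_inv_sub_of_norm_mul_norm_eq_one hprod hM (by nlinarith) hsum'
      _ ≤ (m ^ 3 / 12)⁻¹ := inv_anti₀ (by positivity) hgap
      _ = 12 / m ^ 3 := by ring
end
end

section
/- Let ρ ∈ (0, 1) be a quadratic irrational, i.e. ρ is irrational and is a root of a polynomial of degree 2 with integer coefficients. Then there exists a constant C > 0 such that for every k ∈ ℤ \ {0}: sin²(k ρ π / 2) ≥ C / k². -/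
/-!
By Liouville's theorem a quadratic irrational satisfies `|ρ - p / q| ≥ 1 / (A q²)`. With
`x = kρ/2` and `m` the integer nearest to `x`, this gives
`|x - m| = |k|/2 · |ρ - 2m/k| ≥ 1 / (2A|k|)`, and Jordan's inequality on `[-π/2, π/2]` gives
`|sin (πx)| = |sin (π(x - m))| ≥ 2|x - m| ≥ 1 / (A|k|)`.
-/

open Real Polynomial

lemma Real.two_mul_abs_sub_round_le_abs_sin_pi_mul (x : ℝ) :
    2 * |x - round x| ≤ |sin (π * x)| := by
  have hshift : sin (π * x) = (-1) ^ round x * sin (π * (x - round x)) := by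
    rw [← sin_add_int_mul_pi]; ring_nf
  have hle : |π * (x - round x)| ≤ π / 2 := by
    rw [abs_mul, abs_of_pos pi_pos]; nlinarith [abs_sub_round x, pi_pos]
  calc 2 * |x - round x| = 2 / π * |π * (x - round x)| := by
        rw [abs_mul, abs_of_pos pi_pos]; field_simp
    _ ≤ |sin (π * (x - round x))| := mul_abs_le_abs_sin hle
    _ = |sin (π * x)| := by
        rw [hshift, abs_mul, abs_zpow, abs_neg, abs_one, one_zpow, one_mul]

lemma Irrational.exists_pos_one_le_abs_pow_mul_abs_sub_div_of_aeval_eq_zero {α : ℝ}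
    (hα : Irrational α) {f : ℤ[X]} (hf : f ≠ 0) (hroot : aeval α f = 0) :
    ∃ A : ℝ, 0 < A ∧ ∀ p q : ℤ, q ≠ 0 →
      1 ≤ |(q : ℝ)| ^ f.natDegree * (|α - p / q| * A) := by
  obtain ⟨A, hA, hlio⟩ :=
    Liouville.exists_pos_real_of_irrational_root hα hf (by rwa [eval_map_algebraMap])
  refine ⟨A, hA, fun p q hq => ?_⟩
  wlog hq_pos : 0 < q generalizing p q
  · simpa [neg_div_neg_eq] using this (-p) (-q) (neg_ne_zero.2 hq) (by omega)
  lift q to ℕ using hq_pos.le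
  obtain ⟨b, rfl⟩ := Nat.exists_eq_succ_of_ne_zero (by omega : q ≠ 0)
  simpa [abs_of_nonneg (by positivity : (0 : ℝ) ≤ b + 1)] using hlio p b

lemma Irrational.exists_pos_one_le_sq_mul_abs_sub_div_of_quadratic {α : ℝ}
    (hα : Irrational α) {a b c : ℤ} (ha : a ≠ 0) (hroot : a * α ^ 2 + b * α + c = 0) :
    ∃ A : ℝ, 0 < A ∧ ∀ p q : ℤ, q ≠ 0 → 1 ≤ (q : ℝ) ^ 2 * (|α - p / q| * A) := by
  have hdeg : (C a * X ^ 2 + C b * X + C c).natDegree = 2 := natDegree_quadratic ha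
  obtain ⟨A, hA, hlio⟩ := hα.exists_pos_one_le_abs_pow_mul_abs_sub_div_of_aeval_eq_zero
    (ne_zero_of_natDegree_gt (n := 0) (by rw [hdeg]; norm_num)) (by simpa using hroot)
  refine ⟨A, hA, fun p q hq => ?_⟩
  simpa only [hdeg, sq_abs] using hlio p q hq

theorem sin_sq_lower_bound_of_quadratic_irrational_general
    (ρ : ℝ) (hirr : Irrational ρ)
    (hquad : ∃ a b c : ℤ, a ≠ 0 ∧ (a:ℝ) * ρ^2 + (b:ℝ) * ρ + (c:ℝ) = 0) :
    ∃ C : ℝ, 0 < C ∧ ∀ k : ℤ, k ≠ 0 →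
      C / (k:ℝ)^2 ≤ Real.sin ((k:ℝ) * ρ * π / 2)^2 := by
  obtain ⟨a, b, c, ha, hroot⟩ := hquad
  obtain ⟨A, hA, hlio⟩ := hirr.exists_pos_one_le_sq_mul_abs_sub_div_of_quadratic ha hroot
  refine ⟨1 / A ^ 2, by positivity, fun k hk => ?_⟩
  set x : ℝ := k * ρ / 2
  have hdist : 1 ≤ |(k : ℝ)| * (2 * |x - round x|) * A := by
    have hx : x - round x = k / 2 * (ρ - ((2 * round x : ℤ) : ℝ) / k) := by
      have hk0 : (k : ℝ) ≠ 0 := Int.cast_ne_zero.2 hk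
      push_cast; field_simp; ring
    rw [hx, abs_mul, abs_div, abs_two]
    convert hlio (2 * round x) k hk using 1
    rw [← sq_abs]; ring
  have hbound : 1 / (A * |(k : ℝ)|) ≤ |sin (k * ρ * π / 2)| := by
    rw [div_le_iff₀ (by positivity), show (k : ℝ) * ρ * π / 2 = π * x by ring]
    calc 1 ≤ |(k : ℝ)| * (2 * |x - round x|) * A := hdist
      _ ≤ |(k : ℝ)| * |sin (π * x)| * A := by
          gcongr; exact two_mul_abs_sub_round_le_abs_sin_pi_mul x
      _ = _ := by ring
  calc 1 / A ^ 2 / (k : ℝ) ^ 2 = (1 / (A * |(k : ℝ)|)) ^ 2 := by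
        rw [div_pow, mul_pow, sq_abs, one_pow, div_div]
    _ ≤ |sin (k * ρ * π / 2)| ^ 2 := by gcongr
    _ = sin (k * ρ * π / 2) ^ 2 := sq_abs _

/-- if `ρ ∈ (0,1)` is a quadratic irrational, then `sin²(kρπ/2) ≥ C/k²`
for all nonzero integers `k`. -/
theorem sin_sq_lower_bound_of_quadratic_irrational
    (ρ : ℝ) (hρ : ρ ∈ Set.Ioo (0:ℝ) 1) (hirr : Irrational ρ)
    (hquad : ∃ a b c : ℤ, a ≠ 0 ∧ (a:ℝ) * ρ^2 + (b:ℝ) * ρ + (c:ℝ) = 0) :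
    ∃ C : ℝ, 0 < C ∧ ∀ k : ℤ, k ≠ 0 →
      C / (k:ℝ)^2 ≤ Real.sin ((k:ℝ) * ρ * π / 2)^2 :=
  sin_sq_lower_bound_of_quadratic_irrational_general ρ hirr hquad
end

section
/- There exist constants 0 < c ≤ C such that for every x ∈ ℝ: c (1 + x²)^{1/8} ≤ ∫_{−∞}^{∞} |s|^{1/4} / (1 + (x − s)²) ds ≤ C (1 + x²)^{1/8}. In particular the integral ∫_{−∞}^{∞} |s|^{1/4} / (1 + (x − s)²) ds is finite for every x ∈ ℝ. -/
/-!
Substituting `t = s - x`, the integral is `∫ |x + t|^p / (1 + t²) dt`. By subadditivity of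
`a ↦ a^p` for `0 ≤ p ≤ 1`, `|x + t|^p ≤ |x|^p + |t|^p`, which bounds the integral by
`π |x|^p + ∫ |t|^p / (1 + t²)`; the last integral is finite because its integrand is
`O(|t|^(p-2))` and `p - 2 < -1`. From below, the integral is even in `x`, and for `x ≥ 0`
the integrand is at least `(1 + x)^p / 5` on `[x + 1, x + 2]`.
-/

open Real MeasureTheory

namespace Real

variable {p : ℝ}

lemma rpow_eq_sq_rpow_half {a : ℝ} (ha : 0 ≤ a) : a ^ p = (a ^ 2) ^ (p / 2) := by
  rw [← rpow_natCast_mul ha]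
  norm_num [mul_div_cancel₀]

lemma abs_rpow_le_one_add_sq_rpow_half (hp : 0 ≤ p) (x : ℝ) :
    |x| ^ p ≤ (1 + x ^ 2) ^ (p / 2) := by
  rw [rpow_eq_sq_rpow_half (abs_nonneg x), sq_abs]
  exact rpow_le_rpow (sq_nonneg x) (by linarith) (by linarith)

lemma one_add_sq_rpow_half_le_one_add_rpow (hp : 0 ≤ p) {x : ℝ} (hx : 0 ≤ x) :
    (1 + x ^ 2) ^ (p / 2) ≤ (1 + x) ^ p := by
  rw [rpow_eq_sq_rpow_half (by linarith : 0 ≤ 1 + x)]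
  exact rpow_le_rpow (by positivity) (by nlinarith) (by linarith)

lemma abs_rpow_div_one_add_sq_le (hp : 0 ≤ p) (t : ℝ) :
    |t| ^ p / (1 + t ^ 2) ≤ 2 * (1 + ‖t‖) ^ (p - 2) := by
  have hpos : 0 < 1 + |t| := by positivity
  have hsq : (1 + |t|) ^ 2 ≤ 2 * (1 + t ^ 2) := by nlinarith [sq_abs t, sq_nonneg (|t| - 1)]
  rw [norm_eq_abs, div_le_iff₀ (by positivity)]
  calc |t| ^ p ≤ (1 + |t|) ^ p := rpow_le_rpow (abs_nonneg t) (by linarith) hp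
    _ = (1 + |t|) ^ (p - 2) * (1 + |t|) ^ 2 := by
        rw [← rpow_natCast, ← rpow_add hpos]; norm_num
    _ ≤ (1 + |t|) ^ (p - 2) * (2 * (1 + t ^ 2)) := by gcongr
    _ = 2 * (1 + |t|) ^ (p - 2) * (1 + t ^ 2) := by ring

lemma abs_rpow_le_abs_rpow_add_abs_sub_rpow (hp0 : 0 ≤ p) (hp1 : p ≤ 1) (x s : ℝ) :
    |s| ^ p ≤ |x| ^ p + |x - s| ^ p :=
  calc |s| ^ p ≤ (|x| + |x - s|) ^ p :=
        rpow_le_rpow (abs_nonneg s) (by simpa using abs_sub x (x - s)) hp0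
    _ ≤ |x| ^ p + |x - s| ^ p := rpow_add_le_add_rpow (abs_nonneg _) (abs_nonneg _) hp0 hp1

end Real

section Integrals

variable {p : ℝ}

lemma integrable_abs_rpow_div_one_add_sq (hp0 : 0 ≤ p) (hp1 : p < 1) :
    Integrable fun t : ℝ => |t| ^ p / (1 + t ^ 2) := by
  refine ((integrable_one_add_norm (E := ℝ) (r := 2 - p) (by simp; linarith)).const_mul 2).mono'
    (by fun_prop : Measurable _).aestronglyMeasurable (.of_forall fun t => ?_)
  rw [norm_of_nonneg (by positivity), neg_sub]
  exact abs_rpow_div_one_add_sq_le hp0 t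

lemma abs_rpow_div_one_add_sq_sub_le (hp0 : 0 ≤ p) (hp1 : p ≤ 1) (x s : ℝ) :
    |s| ^ p / (1 + (x - s) ^ 2) ≤
      |x| ^ p * (1 + (x - s) ^ 2)⁻¹ + |x - s| ^ p / (1 + (x - s) ^ 2) := by
  rw [← div_eq_mul_inv, ← add_div]
  gcongr
  exact abs_rpow_le_abs_rpow_add_abs_sub_rpow hp0 hp1 x s

lemma integrable_majorant_sub (hp0 : 0 ≤ p) (hp1 : p < 1) (x : ℝ) :
    Integrable fun s : ℝ => |x| ^ p * (1 + (x - s) ^ 2)⁻¹ + |x - s| ^ p / (1 + (x - s) ^ 2) :=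
  ((integrable_inv_one_add_sq.const_mul _).add
    (integrable_abs_rpow_div_one_add_sq hp0 hp1)).comp_sub_left x

lemma integrable_abs_rpow_div_one_add_sq_sub (hp0 : 0 ≤ p) (hp1 : p < 1) (x : ℝ) :
    Integrable fun s : ℝ => |s| ^ p / (1 + (x - s) ^ 2) :=
  (integrable_majorant_sub hp0 hp1 x).mono'
    (by fun_prop : Measurable _).aestronglyMeasurable (.of_forall fun s => by
    rw [norm_of_nonneg (by positivity)]
    exact abs_rpow_div_one_add_sq_sub_le hp0 hp1.le x s)

lemma integral_abs_rpow_div_one_add_sq_sub_le (hp0 : 0 ≤ p) (hp1 : p < 1) (x : ℝ) :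
    ∫ s : ℝ, |s| ^ p / (1 + (x - s) ^ 2) ≤
      π * |x| ^ p + ∫ t : ℝ, |t| ^ p / (1 + t ^ 2) := by
  have hshift := integral_sub_left_eq_self
    (fun t : ℝ => |x| ^ p * (1 + t ^ 2)⁻¹ + |t| ^ p / (1 + t ^ 2)) volume x
  calc ∫ s : ℝ, |s| ^ p / (1 + (x - s) ^ 2)
      ≤ ∫ s : ℝ, |x| ^ p * (1 + (x - s) ^ 2)⁻¹ + |x - s| ^ p / (1 + (x - s) ^ 2) :=
        integral_mono (integrable_abs_rpow_div_one_add_sq_sub hp0 hp1 x)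
          (integrable_majorant_sub hp0 hp1 x) (abs_rpow_div_one_add_sq_sub_le hp0 hp1.le x)
    _ = π * |x| ^ p + ∫ t : ℝ, |t| ^ p / (1 + t ^ 2) := by
        rw [hshift, integral_add (integrable_inv_one_add_sq.const_mul _)
          (integrable_abs_rpow_div_one_add_sq hp0 hp1), integral_const_mul,
          integral_univ_inv_one_add_sq, mul_comm]

lemma integral_abs_rpow_div_one_add_sq_sub_neg (x : ℝ) :
    ∫ s : ℝ, |s| ^ p / (1 + (-x - s) ^ 2) = ∫ s : ℝ, |s| ^ p / (1 + (x - s) ^ 2) := by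
  rw [← integral_neg_eq_self]
  congr 1 with s
  rw [abs_neg, show -x - -s = -(x - s) by ring, neg_sq]

lemma integral_abs_rpow_div_one_add_sq_sub_abs (x : ℝ) :
    ∫ s : ℝ, |s| ^ p / (1 + (|x| - s) ^ 2) = ∫ s : ℝ, |s| ^ p / (1 + (x - s) ^ 2) := by
  rcases abs_choice x with h | h <;> rw [h]
  exact integral_abs_rpow_div_one_add_sq_sub_neg x

lemma one_add_rpow_div_five_le_integral (hp0 : 0 ≤ p) (hp1 : p < 1) {x : ℝ} (hx : 0 ≤ x) :
    (1 + x) ^ p / 5 ≤ ∫ s : ℝ, |s| ^ p / (1 + (x - s) ^ 2) := by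
  have hint := integrable_abs_rpow_div_one_add_sq_sub hp0 hp1 x
  have hvol : volume (Set.Icc (x + 1) (x + 2)) = 1 := by rw [volume_Icc]; norm_num
  have hlow : ∀ s ∈ Set.Icc (x + 1) (x + 2), (1 + x) ^ p / 5 ≤ |s| ^ p / (1 + (x - s) ^ 2) := by
    rintro s ⟨hs1, hs2⟩
    have hnum : (1 + x) ^ p ≤ |s| ^ p :=
      rpow_le_rpow (by linarith) (by linarith [le_abs_self s]) hp0
    exact div_le_div₀ (by positivity) hnum (by positivity) (by nlinarith)
  calc (1 + x) ^ p / 5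
      ≤ ∫ s in Set.Icc (x + 1) (x + 2), |s| ^ p / (1 + (x - s) ^ 2) := by
        simpa [measureReal_def, hvol] using
          setIntegral_ge_of_const_le measurableSet_Icc (by simp [hvol]) hlow hint.integrableOn
    _ ≤ ∫ s : ℝ, |s| ^ p / (1 + (x - s) ^ 2) :=
        setIntegral_le_integral hint (.of_forall fun s => by positivity)

theorem exists_integral_abs_rpow_div_one_add_sq_sub_bounds (hp0 : 0 ≤ p) (hp1 : p < 1) :
    ∃ c C : ℝ, 0 < c ∧ c ≤ C ∧ ∀ x : ℝ,
      Integrable (fun s : ℝ => |s| ^ p / (1 + (x - s) ^ 2)) ∧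
      c * (1 + x ^ 2) ^ (p / 2) ≤ ∫ s : ℝ, |s| ^ p / (1 + (x - s) ^ 2) ∧
      (∫ s : ℝ, |s| ^ p / (1 + (x - s) ^ 2)) ≤ C * (1 + x ^ 2) ^ (p / 2) := by
  set K := ∫ t : ℝ, |t| ^ p / (1 + t ^ 2)
  have hK : 0 ≤ K := integral_nonneg fun t => by positivity
  refine ⟨1 / 5, π + K, by norm_num, by linarith [pi_gt_three], fun x =>
    ⟨integrable_abs_rpow_div_one_add_sq_sub hp0 hp1 x, ?_, ?_⟩⟩
  · rw [← integral_abs_rpow_div_one_add_sq_sub_abs, ← sq_abs]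
    have := one_add_rpow_div_five_le_integral hp0 hp1 (abs_nonneg x)
    have := one_add_sq_rpow_half_le_one_add_rpow hp0 (abs_nonneg x)
    linarith
  · have hone : 1 ≤ (1 + x ^ 2) ^ (p / 2) := one_le_rpow (by nlinarith) (by linarith)
    have := abs_rpow_le_one_add_sq_rpow_half hp0 x
    have := integral_abs_rpow_div_one_add_sq_sub_le hp0 hp1 x
    nlinarith [pi_pos]

end Integrals

/-- two-sided bound
`c (1+x²)^{1/8} ≤ ∫_ℝ |s|^{1/4}/(1+(x−s)²) ds ≤ C (1+x²)^{1/8}`, the integral being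
finite for every real `x`. -/
theorem integral_rpow_quarter_bounds :
    ∃ c C : ℝ, 0 < c ∧ c ≤ C ∧ ∀ x : ℝ,
      Integrable (fun s : ℝ => |s| ^ ((1:ℝ)/4) / (1 + (x - s)^2)) ∧
      c * (1 + x^2) ^ ((1:ℝ)/8) ≤ ∫ s : ℝ, |s| ^ ((1:ℝ)/4) / (1 + (x - s)^2) ∧
      (∫ s : ℝ, |s| ^ ((1:ℝ)/4) / (1 + (x - s)^2)) ≤ C * (1 + x^2) ^ ((1:ℝ)/8) := by
  have h := exists_integral_abs_rpow_div_one_add_sq_sub_bounds (p := 1 / 4) (by norm_num)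
    (by norm_num)
  norm_num at h ⊢
  exact h
end
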